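/- arXiv:2605.09490 — 2 statements merged into one kernel-verified Lean document; each statement's English description precedes it below -/
import Mathlib

section
/- General eviction-error bound: For any nonempty E ⊊ I, ‖ô − o‖ ≤ α_E · max_{i∈I\E} ‖v_i‖ + Σ_{i∈E} α_i·‖v_i‖. -/
/-- **General eviction-error bound.**
For any nonempty `E ⊊ I`,
`‖ô - o‖ ≤ α_E · max_{i ∈ I \ E} ‖v i‖ + ∑_{i ∈ E} α_i ‖v i‖`. -/
theorem eviction_error_bound {ι H : Type*} [DecidableEq ι] [NormedAddCommGroup H] [NormedSpace ℝ H]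
    (I : Finset ι) (hI : I.Nonempty) (u : ι → ℝ) (v : ι → H)
    (E : Finset ι) (hE : E ⊂ I) (hEne : E.Nonempty) :
    ‖(∑ i ∈ I \ E, (Real.exp (u i) / (∑ j ∈ I \ E, Real.exp (u j))) • v i) -
        ∑ i ∈ I, (Real.exp (u i) / (∑ j ∈ I, Real.exp (u j))) • v i‖ ≤
      (∑ i ∈ E, Real.exp (u i) / (∑ j ∈ I, Real.exp (u j))) *
          ((I \ E).sup' (Finset.sdiff_nonempty.mpr hE.2) fun i => ‖v i‖) +
        ∑ i ∈ E, (Real.exp (u i) / (∑ j ∈ I, Real.exp (u j))) * ‖v i‖ := by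
  set Z : ℝ := ∑ j ∈ I, Real.exp (u j) with hZ
  set Z' : ℝ := ∑ j ∈ I \ E, Real.exp (u j) with hZ'
  have hne : (I \ E).Nonempty := Finset.sdiff_nonempty.mpr hE.2
  have hZpos : 0 < Z := Finset.sum_pos (fun i _ => Real.exp_pos _) hI
  have hZ'pos : 0 < Z' := Finset.sum_pos (fun i _ => Real.exp_pos _) hne
  have hsplit : Z' + ∑ j ∈ E, Real.exp (u j) = Z :=
    Finset.sum_sdiff hE.1
  have hZ'le : Z' ≤ Z := by
    rw [← hsplit]
    have : (0:ℝ) ≤ ∑ j ∈ E, Real.exp (u j) :=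
      Finset.sum_nonneg fun i _ => (Real.exp_pos _).le
    linarith
  have hsumI : ∑ i ∈ I, (Real.exp (u i) / Z) • v i
      = (∑ i ∈ I \ E, (Real.exp (u i) / Z) • v i) + ∑ i ∈ E, (Real.exp (u i) / Z) • v i :=
    (Finset.sum_sdiff hE.1).symm
  set M : ℝ := (I \ E).sup' hne fun i => ‖v i‖ with hM
  have key : (∑ i ∈ I \ E, (Real.exp (u i) / Z') • v i) -
      ∑ i ∈ I, (Real.exp (u i) / Z) • v i
      = (∑ i ∈ I \ E, (Real.exp (u i) / Z' - Real.exp (u i) / Z) • v i)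
        - ∑ i ∈ E, (Real.exp (u i) / Z) • v i := by
    rw [hsumI]
    simp only [sub_smul, Finset.sum_sub_distrib]
    abel
  rw [key]
  calc ‖(∑ i ∈ I \ E, (Real.exp (u i) / Z' - Real.exp (u i) / Z) • v i)
        - ∑ i ∈ E, (Real.exp (u i) / Z) • v i‖
      ≤ ‖∑ i ∈ I \ E, (Real.exp (u i) / Z' - Real.exp (u i) / Z) • v i‖
        + ‖∑ i ∈ E, (Real.exp (u i) / Z) • v i‖ := norm_sub_le _ _
    _ ≤ (∑ i ∈ E, Real.exp (u i) / Z) * M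
        + ∑ i ∈ E, (Real.exp (u i) / Z) * ‖v i‖ := by
        gcongr ?_ + ?_
        · calc ‖∑ i ∈ I \ E, (Real.exp (u i) / Z' - Real.exp (u i) / Z) • v i‖
              ≤ ∑ i ∈ I \ E, ‖(Real.exp (u i) / Z' - Real.exp (u i) / Z) • v i‖ :=
                norm_sum_le _ _
            _ ≤ ∑ i ∈ I \ E, (Real.exp (u i) / Z' - Real.exp (u i) / Z) * M := by
                apply Finset.sum_le_sum
                intro i hi
                rw [norm_smul, Real.norm_eq_abs]
                have hnn : 0 ≤ Real.exp (u i) / Z' - Real.exp (u i) / Z := by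
                  have := Real.exp_pos (u i)
                  have h1 : Real.exp (u i) / Z ≤ Real.exp (u i) / Z' :=
                    div_le_div_of_nonneg_left this.le hZ'pos hZ'le
                  linarith
                rw [abs_of_nonneg hnn]
                exact mul_le_mul_of_nonneg_left (Finset.le_sup' (fun i => ‖v i‖) hi) hnn
            _ = (∑ i ∈ I \ E, (Real.exp (u i) / Z' - Real.exp (u i) / Z)) * M := by
                rw [Finset.sum_mul]
            _ = (∑ i ∈ E, Real.exp (u i) / Z) * M := by
                congr 1
                rw [Finset.sum_sub_distrib, ← Finset.sum_div, ← Finset.sum_div, ← hZ']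
                rw [div_self hZ'pos.ne']
                have : ∑ i ∈ E, Real.exp (u i) / Z = (Z - Z') / Z := by
                  rw [← Finset.sum_div]
                  congr 1
                  linarith [hsplit]
                rw [this]
                field_simp
        · calc ‖∑ i ∈ E, (Real.exp (u i) / Z) • v i‖
              ≤ ∑ i ∈ E, ‖(Real.exp (u i) / Z) • v i‖ := norm_sum_le _ _
            _ = ∑ i ∈ E, (Real.exp (u i) / Z) * ‖v i‖ := by
                apply Finset.sum_congr rfl
                intro i _
                rw [norm_smul, Real.norm_eq_abs,
                  abs_of_nonneg (div_nonneg (Real.exp_pos _).le hZpos.le)]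
end

section
/- Uniform-norm eviction-error bound: If ‖v_i‖ ≤ V for every i ∈ I and E ⊊ I, then ‖ô − o‖ ≤ 2·V·α_E. In particular, when the evicted set carries attention mass α_E ≤ ε, the approximation error is at most 2Vε. -/
/-! Since `α_i = (Z'/Z) α'_i` off `E` and `Z'/Z = 1 - α_E`, the exact output splits as
`o = (1 - α_E) ô + ∑_{i ∈ E} α_i v_i`, so `ô - o = α_E ô - ∑_{i ∈ E} α_i v_i`.
Both terms have norm at most `V α_E`, because `ô` is a convex combination of the `v_i`. -/

open Finset

section

variable {ι H : Type*} [NormedAddCommGroup H] [NormedSpace ℝ H]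

lemma norm_sum_smul_le_sum_mul {s : Finset ι} {c : ι → ℝ} {v : ι → H} {V : ℝ}
    (hc : ∀ i ∈ s, 0 ≤ c i) (hv : ∀ i ∈ s, ‖v i‖ ≤ V) :
    ‖∑ i ∈ s, c i • v i‖ ≤ (∑ i ∈ s, c i) * V := by
  rw [sum_mul]
  refine (norm_sum_le _ _).trans (sum_le_sum fun i hi => ?_)
  rw [norm_smul, Real.norm_of_nonneg (hc i hi)]
  exact mul_le_mul_of_nonneg_left (hv i hi) (hc i hi)

lemma norm_sum_div_smul_le {s : Finset ι} {w : ι → ℝ} {v : ι → H} {V : ℝ}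
    (hw : ∀ i ∈ s, 0 ≤ w i) (hs : 0 < ∑ j ∈ s, w j) (hv : ∀ i ∈ s, ‖v i‖ ≤ V) :
    ‖∑ i ∈ s, (w i / ∑ j ∈ s, w j) • v i‖ ≤ V := by
  calc ‖∑ i ∈ s, (w i / ∑ j ∈ s, w j) • v i‖
      ≤ (∑ i ∈ s, w i / ∑ j ∈ s, w j) * V :=
        norm_sum_smul_le_sum_mul (fun i hi => div_nonneg (hw i hi) hs.le) hv
    _ = V := by rw [← sum_div, div_self hs.ne', one_mul]

variable [DecidableEq ι]

lemma sum_sdiff_div_smul_sub_sum_div_smul {I E : Finset ι} (w : ι → ℝ) (v : ι → H)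
    (hE : E ⊆ I) (hZ : ∑ j ∈ I, w j ≠ 0) (hZ' : ∑ j ∈ I \ E, w j ≠ 0) :
    ∑ i ∈ I \ E, (w i / ∑ j ∈ I \ E, w j) • v i - ∑ i ∈ I, (w i / ∑ j ∈ I, w j) • v i =
      (∑ i ∈ E, w i / ∑ j ∈ I, w j) • ∑ i ∈ I \ E, (w i / ∑ j ∈ I \ E, w j) • v i -
        ∑ i ∈ E, (w i / ∑ j ∈ I, w j) • v i := by
  set Z := ∑ j ∈ I, w j
  set Z' := ∑ j ∈ I \ E, w j
  have hmass : ∑ i ∈ E, w i / Z = 1 - Z' / Z := by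
    have hsplit : Z' + ∑ i ∈ E, w i = Z := sum_sdiff hE
    rw [← sum_div, eq_sub_iff_add_eq, ← add_div, add_comm, hsplit, div_self hZ]
  have hkept : ∑ i ∈ I \ E, (w i / Z) • v i = (Z' / Z) • ∑ i ∈ I \ E, (w i / Z') • v i := by
    rw [smul_sum]
    refine sum_congr rfl fun i _ => ?_
    rw [smul_smul]
    congr 1
    field_simp
  rw [hmass, sub_smul, one_smul, ← hkept, ← sum_sdiff hE]
  abel

lemma norm_renormalized_sub_le {I E : Finset ι} {w : ι → ℝ} {v : ι → H} {V : ℝ}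
    (hw : ∀ i ∈ I, 0 ≤ w i) (hE : E ⊆ I) (hZ' : 0 < ∑ j ∈ I \ E, w j)
    (hv : ∀ i ∈ I, ‖v i‖ ≤ V) :
    ‖∑ i ∈ I \ E, (w i / ∑ j ∈ I \ E, w j) • v i - ∑ i ∈ I, (w i / ∑ j ∈ I, w j) • v i‖ ≤
      2 * V * ∑ i ∈ E, w i / ∑ j ∈ I, w j := by
  have hZ : 0 < ∑ j ∈ I, w j :=
    hZ'.trans_le (sum_le_sum_of_subset_of_nonneg sdiff_subset fun i hi _ => hw i hi)
  have hα : ∀ i ∈ E, 0 ≤ w i / ∑ j ∈ I, w j := fun i hi => div_nonneg (hw i (hE hi)) hZ.le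
  have hkept : ‖∑ i ∈ I \ E, (w i / ∑ j ∈ I \ E, w j) • v i‖ ≤ V :=
    norm_sum_div_smul_le (fun i hi => hw i (mem_sdiff.1 hi).1) hZ'
      fun i hi => hv i (mem_sdiff.1 hi).1
  have hevicted : ‖∑ i ∈ E, (w i / ∑ j ∈ I, w j) • v i‖ ≤ (∑ i ∈ E, w i / ∑ j ∈ I, w j) * V :=
    norm_sum_smul_le_sum_mul hα fun i hi => hv i (hE hi)
  rw [sum_sdiff_div_smul_sub_sum_div_smul w v hE hZ.ne' hZ'.ne']
  refine (norm_sub_le _ _).trans ?_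
  rw [norm_smul, Real.norm_of_nonneg (sum_nonneg hα)]
  linarith [mul_le_mul_of_nonneg_left hkept (sum_nonneg hα)]

end

theorem eviction_error_uniform_bound_general {ι H : Type*} [DecidableEq ι]
    [NormedAddCommGroup H] [NormedSpace ℝ H]
    (I : Finset ι) (u : ι → ℝ) (v : ι → H) (V : ℝ)
    (hV : ∀ i ∈ I, ‖v i‖ ≤ V)
    (E : Finset ι) (hE : E ⊂ I) :
    ‖(∑ i ∈ I \ E, (Real.exp (u i) / (∑ j ∈ I \ E, Real.exp (u j))) • v i) -
        ∑ i ∈ I, (Real.exp (u i) / (∑ j ∈ I, Real.exp (u j))) • v i‖ ≤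
      2 * V * ∑ i ∈ E, Real.exp (u i) / (∑ j ∈ I, Real.exp (u j)) ∧
    ∀ ε : ℝ, (∑ i ∈ E, Real.exp (u i) / (∑ j ∈ I, Real.exp (u j))) ≤ ε →
      ‖(∑ i ∈ I \ E, (Real.exp (u i) / (∑ j ∈ I \ E, Real.exp (u j))) • v i) -
          ∑ i ∈ I, (Real.exp (u i) / (∑ j ∈ I, Real.exp (u j))) • v i‖ ≤
        2 * V * ε := by
  obtain ⟨k, hkI, hkE⟩ := exists_of_ssubset hE
  have hV₀ : 0 ≤ V := (norm_nonneg _).trans (hV k hkI)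
  have hbound := norm_renormalized_sub_le (w := fun i => Real.exp (u i))
    (fun i _ => (Real.exp_pos _).le) hE.subset
    (sum_pos (fun i _ => Real.exp_pos _) ⟨k, mem_sdiff.2 ⟨hkI, hkE⟩⟩) hV
  exact ⟨hbound, fun ε hε => hbound.trans (by gcongr)⟩

/-- **Uniform-norm eviction-error bound.**
If `‖v i‖ ≤ V` for every `i ∈ I` and `E ⊊ I`, then `‖ô - o‖ ≤ 2 · V · α_E`;
in particular if the evicted attention mass `α_E ≤ ε` then the error is at most `2·V·ε`. -/
theorem eviction_error_uniform_bound {ι H : Type*} [DecidableEq ι]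
    [NormedAddCommGroup H] [NormedSpace ℝ H]
    (I : Finset ι) (hI : I.Nonempty) (u : ι → ℝ) (v : ι → H) (V : ℝ)
    (hV : ∀ i ∈ I, ‖v i‖ ≤ V)
    (E : Finset ι) (hE : E ⊂ I) :
    ‖(∑ i ∈ I \ E, (Real.exp (u i) / (∑ j ∈ I \ E, Real.exp (u j))) • v i) -
        ∑ i ∈ I, (Real.exp (u i) / (∑ j ∈ I, Real.exp (u j))) • v i‖ ≤
      2 * V * ∑ i ∈ E, Real.exp (u i) / (∑ j ∈ I, Real.exp (u j)) ∧
    ∀ ε : ℝ, (∑ i ∈ E, Real.exp (u i) / (∑ j ∈ I, Real.exp (u j))) ≤ ε →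
      ‖(∑ i ∈ I \ E, (Real.exp (u i) / (∑ j ∈ I \ E, Real.exp (u j))) • v i) -
          ∑ i ∈ I, (Real.exp (u i) / (∑ j ∈ I, Real.exp (u j))) • v i‖ ≤
        2 * V * ε :=
  eviction_error_uniform_bound_general I u v V hV E hE
end
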